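/- arXiv:2109.13590 — 3 statements merged into one kernel-verified Lean document; each statement's English description precedes it below -/
import Mathlib

section
/- Let S, S' ⊆ ℝ^d be locally finite sets and let T : S → S' be a bijection. Then T is cyclically monotone if and only if T is locally optimal, i.e. for every bijection T̃ : S → S' such that the set {x ∈ S : T̃(x) ≠ T(x)} is finite, one has ∑_{x ∈ S, T̃(x) ≠ T(x)} (|T(x) − x|² − |T̃(x) − x|²) ≤ 0. -/
/-! A permutation `σ` of a finite set `F` turns `T` into `T ∘ σ`, and since the terms `‖T x‖²`
are merely permuted, `∑_F (‖T x - x‖² - ‖T (σ x) - x‖²) = -2 ∑_F ⟪T (σ x), σ x - x⟫`. So local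
optimality says `∑_F ⟪T (σ x), σ x - x⟫ ≥ 0` for every such `σ`, and cyclic monotonicity says
the same for the cyclic permutation of the points of a closed walk. Both conditions reduce to
simple cycles: a permutation is a disjoint product of cycles, and a closed walk through a
repeated point splits there into two shorter closed walks. -/

noncomputable section

/-- Euclidean space `ℝ^d`. -/
abbrev Euc (d : ℕ) := EuclideanSpace ℝ (Fin d)

/-- A set `S ⊆ ℝ^d` is locally finite: its intersection with every bounded set is finite. -/
def IsLocallyFiniteSet {d : ℕ} (S : Set (Euc d)) : Prop :=
  ∀ B : Set (Euc d), Bornology.IsBounded B → (S ∩ B).Finite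

/-- A map `T` is cyclically monotone on `S`: for every cycle `x₁, …, x_N` of points of `S`
(indices cyclic, `x₀ := x_N`), `∑ₙ T(xₙ) · (xₙ - xₙ₋₁) ≥ 0`. -/
def CyclicallyMonotoneMapOn {d : ℕ} (S : Set (Euc d)) (T : Euc d → Euc d) : Prop :=
  ∀ (N : ℕ) (x : Fin (N + 1) → Euc d), (∀ n, x n ∈ S) →
    0 ≤ ∑ n : Fin (N + 1), (inner ℝ (T (x n)) (x n - x (n - 1)) : ℝ)

open Finset Function Equiv
open scoped InnerProductSpace

section CyclicCost

variable {α ι : Type*} (c : α → α → ℝ)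

/-- The cost of the walk `x 0 → x 1 → ⋯ → x n`, where `c b a` is the cost of a step from `a`
to `b`. -/
def walkCost (x : ℕ → α) (n : ℕ) : ℝ :=
  ∑ k ∈ range n, c (x (k + 1)) (x k)

def IsCyclicallyMonotone (S : Set α) : Prop :=
  ∀ (n : ℕ) (x : ℕ → α), x n = x 0 → (∀ k < n, x k ∈ S) → 0 ≤ walkCost c x n

/-- Cutting the closed walk `x a → ⋯ → x (a + b)` out of a walk. -/
theorem walkCost_eq_add_of_apply_eq {x : ℕ → α} {a b e : ℕ} (h : x (a + b) = x a) :
    walkCost c x (a + b + e) = walkCost c (fun k => x (a + k)) b +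
      walkCost c (fun k => if k < a then x k else x (k + b)) (a + e) := by
  simp only [walkCost, sum_range_add]
  have hhead : ∑ k ∈ range a, c (if k + 1 < a then x (k + 1) else x (k + 1 + b))
      (if k < a then x k else x (k + b)) = ∑ k ∈ range a, c (x (k + 1)) (x k) := by
    refine sum_congr rfl fun k hk => ?_
    rw [if_pos (mem_range.mp hk)]
    split_ifs
    · rfl
    · rw [show k + 1 = a by grind, h]
  have htail : ∀ k, c (if a + k + 1 < a then x (a + k + 1) else x (a + k + 1 + b))
      (if a + k < a then x (a + k) else x (a + k + b)) = c (x (a + b + k + 1)) (x (a + b + k)) := by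
    intro k
    rw [if_neg (by omega), if_neg (by omega)]
    congr 2 <;> ring
  simp only [htail, hhead, ← add_assoc]
  ring

theorem isCyclicallyMonotone_of_injOn {S : Set α}
    (h : ∀ n (x : ℕ → α), x n = x 0 → (∀ k < n, x k ∈ S) → Set.InjOn x (Set.Iio n) →
      0 ≤ walkCost c x n) :
    IsCyclicallyMonotone c S := by
  intro n
  induction n using Nat.strong_induction_on with
  | _ n ih =>
  intro x hx hxS
  by_cases hinj : Set.InjOn x (Set.Iio n)
  · exact h n x hx hxS hinj
  obtain ⟨i, j, hij, hxij, hjn⟩ : ∃ i j, i < j ∧ x j = x i ∧ j < n := by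
    simp only [Set.InjOn, Set.mem_Iio, not_forall] at hinj
    obtain ⟨i, hi, j, hj, hxij, hne⟩ := hinj
    rcases lt_or_gt_of_ne hne with hlt | hlt
    exacts [⟨i, j, hlt, hxij.symm, hj⟩, ⟨j, i, hlt, hxij, hi⟩]
  obtain ⟨b, rfl⟩ := Nat.exists_eq_add_of_lt hij
  obtain ⟨e, rfl⟩ := Nat.exists_eq_add_of_lt hjn
  have hloop : x (i + (b + 1)) = x i := by rwa [← add_assoc]
  rw [show i + b + 1 + e + 1 = i + (b + 1) + (e + 1) by ring,
    walkCost_eq_add_of_apply_eq c hloop]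
  refine add_nonneg (ih (b + 1) (by omega) _ (by simpa using hloop) fun k hk => hxS _ (by omega))
    (ih (i + (e + 1)) (by omega) _ ?_ fun k hk => ?_)
  · rw [if_neg (by omega), show i + (e + 1) + (b + 1) = i + b + 1 + e + 1 by ring, hx]
    split_ifs with hi
    · rfl
    · obtain rfl : i = 0 := by omega
      simpa using hloop.symm
  · split_ifs <;> exact hxS _ (by omega)

namespace IsCyclicallyMonotone

variable {c} {S : Set α}

theorem cost_self_nonneg (hc : IsCyclicallyMonotone c S) {a : α} (ha : a ∈ S) : 0 ≤ c a a := by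
  simpa [walkCost] using hc 1 (fun _ => a) rfl fun _ _ => ha

theorem sum_support_nonneg_of_isCycle [Fintype ι] [DecidableEq ι] (hc : IsCyclicallyMonotone c S)
    {ρ : Perm ι} (hρ : ρ.IsCycle) {y : ι → α} (hy : ∀ i, y i ∈ S) :
    0 ≤ ∑ i ∈ ρ.support, c (y (ρ i)) (y i) := by
  set a := Classical.choose hρ
  -- `k ↦ (ρ ^ k) a`, `k < orderOf ρ`, enumerates the support, which is thus a closed walk
  let e : Fin (orderOf ρ) ≃ ρ.support :=
    (finEquivZPowers (isOfFinOrder_of_finite ρ)).trans hρ.zpowersEquivSupport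
  have he : ∀ k, (e k : ι) = (ρ ^ (k : ℕ)) a := fun k => rfl
  rw [← sum_coe_sort, ← e.sum_comp]
  simp only [he, ← Perm.mul_apply, ← pow_succ']
  rw [Fin.sum_univ_eq_sum_range (fun k => c (y ((ρ ^ (k + 1)) a)) (y ((ρ ^ k) a)))]
  exact hc _ (fun k => y ((ρ ^ k) a)) (by simp [pow_orderOf_eq_one]) fun k _ => hy _

theorem sum_perm_nonneg [Fintype ι] (hc : IsCyclicallyMonotone c S) (ρ : Perm ι) {y : ι → α}
    (hy : ∀ i, y i ∈ S) : 0 ≤ ∑ i, c (y (ρ i)) (y i) := by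
  classical
  have hsupport : ∀ π : Perm ι, 0 ≤ ∑ i ∈ π.support, c (y (π i)) (y i) := by
    intro π
    induction π using Perm.cycle_induction_on with
    | base_one => simp
    | base_cycles π hπ => exact hc.sum_support_nonneg_of_isCycle hπ hy
    | induction_disjoint σ τ hστ _ hσ hτ =>
      rw [hστ.support_mul, sum_union hστ.disjoint_support]
      refine add_nonneg (hσ.trans_eq (sum_congr rfl fun i hi => ?_))
        (hτ.trans_eq (sum_congr rfl fun i hi => ?_))
      · rw [Perm.mul_apply, Perm.notMem_support.mp (hστ.mem_imp hi)]
      · have hτi : τ i ∈ τ.support := Perm.apply_mem_support.mpr hi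
        rw [Perm.mul_apply, Perm.notMem_support.mp (hστ.symm.mem_imp hτi)]
  rw [← sum_add_sum_compl ρ.support]
  refine add_nonneg (hsupport ρ) (sum_nonneg fun i hi => ?_)
  rw [Perm.notMem_support.mp (mem_compl.mp hi)]
  exact hc.cost_self_nonneg (hy i)

end IsCyclicallyMonotone

theorem sum_fin_add_one_eq_walkCost {N : ℕ} (y : Fin (N + 1) → α) {x : ℕ → α}
    (hxy : ∀ i : Fin (N + 1), x i = y i) (hx : x (N + 1) = x 0) :
    ∑ i, c (y (i + 1)) (y i) = walkCost c x (N + 1) := by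
  rw [walkCost, ← Fin.sum_univ_eq_sum_range (fun k => c (x (k + 1)) (x k))]
  refine sum_congr rfl fun i _ => ?_
  rw [hxy]
  congr 1
  rcases Fin.eq_castSucc_or_eq_last i with ⟨j, rfl⟩ | rfl
  · rw [← hxy, Fin.coeSucc_eq_succ, Fin.val_succ, Fin.val_castSucc]
  · rw [Fin.last_add_one, ← hxy, Fin.val_last, hx, Fin.val_zero]

theorem sum_fin_sub_one_eq_walkCost {N : ℕ} (y : Fin (N + 1) → α) {x : ℕ → α}
    (hxy : ∀ i : Fin (N + 1), x i = y i) (hx : x (N + 1) = x 0) :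
    ∑ i, c (y i) (y (i - 1)) = walkCost c x (N + 1) := by
  rw [← sum_fin_add_one_eq_walkCost c y hxy hx, ← Equiv.sum_comp (Equiv.addRight 1)]
  simp only [Equiv.coe_addRight, add_sub_cancel_right]

theorem isCyclicallyMonotone_of_sum_perm_nonneg {S : Set α}
    (h : ∀ n (ρ : Perm (Fin n)) (y : Fin n → α), Injective y → (∀ i, y i ∈ S) →
      0 ≤ ∑ i, c (y (ρ i)) (y i)) :
    IsCyclicallyMonotone c S := by
  refine isCyclicallyMonotone_of_injOn c fun n x hx hxS hinj => ?_
  cases n with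
  | zero => simp [walkCost]
  | succ N =>
    rw [← sum_fin_add_one_eq_walkCost c (fun i => x i) (fun _ => rfl) hx]
    simpa only [finRotate_apply] using h (N + 1) (finRotate (N + 1)) (fun i => x i)
      (fun i j hij => Fin.ext (hinj i.isLt j.isLt hij)) fun i => hxS _ i.isLt

end CyclicCost

theorem Set.BijOn.image_eq_of_eqOn_diff {α β : Type*} {f g : α → β} {s u : Set α} {t : Set β}
    (hf : Set.BijOn f s t) (hg : Set.BijOn g s t) (hu : u ⊆ s) (hfg : Set.EqOn f g (s \ u)) :
    g '' u = f '' u := by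
  suffices key : ∀ f g : α → β, Set.BijOn f s t → Set.BijOn g s t → Set.EqOn f g (s \ u) →
      g '' u ⊆ f '' u from (key f g hf hg hfg).antisymm (key g f hg hf hfg.symm)
  rintro f g hf hg hfg _ ⟨v, hv, rfl⟩
  obtain ⟨w, hw, hfw⟩ := hf.surjOn (hg.mapsTo (hu hv))
  by_cases hwu : w ∈ u
  · exact ⟨w, hwu, hfw⟩
  · obtain rfl : w = v := hg.injOn hw (hu hv) (by rw [← hfg ⟨hw, hwu⟩, hfw])
    exact ⟨w, hv, hfw⟩

theorem Equiv.Perm.bijOn_viaFintypeEmbedding {α β : Type*} [Fintype α] [DecidableEq β]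
    (e : Perm α) (f : α ↪ β) {s : Set β} (hf : Set.range f ⊆ s) :
    Set.BijOn (e.viaFintypeEmbedding f) s s :=
  (e.viaFintypeEmbedding f).bijOn fun b => by
    by_cases hb : b ∈ Set.range f
    · obtain ⟨a, rfl⟩ := hb
      simp only [Perm.viaFintypeEmbedding_apply_image, hf ⟨_, rfl⟩]
    · rw [Perm.viaFintypeEmbedding_apply_notMem_range _ _ hb]

section InnerProductSpace

variable {E ι : Type*} [NormedAddCommGroup E] [InnerProductSpace ℝ E]

def IsLocallyOptimalOn (S S' : Set E) (T : E → E) : Prop :=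
  ∀ T' : E → E, Set.BijOn T' S S' → ∀ hfin : {x ∈ S | T' x ≠ T x}.Finite,
    ∑ x ∈ hfin.toFinset, (‖T x - x‖ ^ 2 - ‖T' x - x‖ ^ 2) ≤ 0

theorem sum_norm_sub_sq_sub_perm (T : E → E) [Fintype ι] (ρ : Perm ι) (y : ι → E) :
    ∑ i, (‖T (y i) - y i‖ ^ 2 - ‖T (y (ρ i)) - y i‖ ^ 2) =
      -2 * ∑ i, ⟪T (y (ρ i)), y (ρ i) - y i⟫_ℝ := by
  have hnorm := Equiv.sum_comp ρ fun i => ‖T (y i)‖ ^ 2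
  have hinner := Equiv.sum_comp ρ fun i => ⟪T (y i), y i⟫_ℝ
  simp only [norm_sub_sq_real, inner_sub_right, sum_sub_distrib, sum_add_distrib, ← mul_sum]
  linarith

variable {T : E → E} {S S' : Set E}

theorem IsCyclicallyMonotone.isLocallyOptimalOn
    (hc : IsCyclicallyMonotone (fun a b => ⟪T a, a - b⟫_ℝ) S) (hT : Set.BijOn T S S') :
    IsLocallyOptimalOn S S' T := by
  intro T' hT' hfin
  set F := hfin.toFinset
  have hF : ↑F ⊆ S := fun v hv => (hfin.mem_toFinset.mp hv).1
  have hTT' : Set.EqOn T T' (S \ F) := fun v hv => by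
    by_contra hne
    exact hv.2 (hfin.mem_toFinset.mpr ⟨hv.1, Ne.symm hne⟩)
  have hTF := (hT.injOn.mono hF).bijOn_image
  have hT'F := (hT'.injOn.mono hF).bijOn_image
  rw [hT.image_eq_of_eqOn_diff hT' hF hTT'] at hT'F
  -- `e = T⁻¹ ∘ T'` permutes `F`
  let e : Perm (F : Set E) := (hT'F.equiv T').trans (hTF.equiv T).symm
  have he : ∀ v, T (e v) = T' v := fun v =>
    congrArg Subtype.val ((hTF.equiv T).apply_symm_apply (hT'F.equiv T' v))
  calc ∑ v ∈ F, (‖T v - v‖ ^ 2 - ‖T' v - v‖ ^ 2)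
      = ∑ v : (F : Set E), (‖T v - v‖ ^ 2 - ‖T (e v) - v‖ ^ 2) := by
        simp only [he]
        exact (sum_coe_sort F _).symm
    _ = -2 * ∑ v : (F : Set E), ⟪T (e v), e v - v⟫_ℝ := sum_norm_sub_sq_sub_perm T e Subtype.val
    _ ≤ 0 := by
      nlinarith [hc.sum_perm_nonneg e (y := Subtype.val) fun v => hF v.2]

theorem IsLocallyOptimalOn.sum_inner_sub_perm_nonneg (hopt : IsLocallyOptimalOn S S' T)
    (hT : Set.BijOn T S S') [Fintype ι] (ρ : Perm ι) {y : ι → E} (hy : Injective y)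
    (hyS : ∀ i, y i ∈ S) :
    0 ≤ ∑ i, ⟪T (y (ρ i)), y (ρ i) - y i⟫_ℝ := by
  classical
  let σ := ρ.viaFintypeEmbedding ⟨y, hy⟩
  have hσ : ∀ i, σ (y i) = y (ρ i) := ρ.viaFintypeEmbedding_apply_image ⟨y, hy⟩
  have hσS : Set.BijOn σ S S := ρ.bijOn_viaFintypeEmbedding _ (Set.range_subset_iff.mpr hyS)
  have hD : {x ∈ S | (T ∘ σ) x ≠ T x} ⊆ Set.range y := fun v hv => by
    by_contra hvy
    exact hv.2 (congrArg T (ρ.viaFintypeEmbedding_apply_notMem_range ⟨y, hy⟩ hvy))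
  have hfin := (Set.finite_range y).subset hD
  have hlocal := hopt _ (hT.comp hσS) hfin
  rw [sum_subset (s₂ := univ.image y) (fun v hv => by simpa using hD (hfin.mem_toFinset.mp hv))
    fun v hv hvD => ?_, sum_image hy.injOn] at hlocal
  · simp only [comp_apply, hσ] at hlocal
    rw [sum_norm_sub_sq_sub_perm] at hlocal
    linarith
  · obtain ⟨i, -, rfl⟩ := mem_image.mp hv
    have hfix : (T ∘ σ) (y i) = T (y i) := by
      by_contra hne
      exact hvD (hfin.mem_toFinset.mpr ⟨hyS i, hne⟩)
    rw [hfix, sub_self]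

end InnerProductSpace

theorem cyclicallyMonotoneMapOn_iff {d : ℕ} {S : Set (Euc d)} {T : Euc d → Euc d} :
    CyclicallyMonotoneMapOn S T ↔ IsCyclicallyMonotone (fun a b => ⟪T a, a - b⟫_ℝ) S := by
  constructor
  · intro h n x hx hxS
    cases n with
    | zero => simp [walkCost]
    | succ N =>
      exact (h N _ fun i => hxS _ i.isLt).trans_eq
        (sum_fin_sub_one_eq_walkCost (fun a b => ⟪T a, a - b⟫_ℝ) _ (fun _ => rfl) hx)
  · intro h N y hy
    exact (h _ _ (by simp) fun k _ => hy _).trans_eq (sum_fin_sub_one_eq_walkCost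
      (fun a b => ⟪T a, a - b⟫_ℝ) y (x := fun k => y (Fin.ofNat (N + 1) k)) (fun i => by simp)
      (by simp)).symm

theorem cyclicallyMonotone_iff_locally_optimal_general
    {d : ℕ} (S S' : Set (Euc d))
    (T : Euc d → Euc d) (hT : Set.BijOn T S S') :
    CyclicallyMonotoneMapOn S T ↔
      ∀ T' : Euc d → Euc d, Set.BijOn T' S S' →
        ∀ hfin : {x ∈ S | T' x ≠ T x}.Finite,
          ∑ x ∈ hfin.toFinset, (‖T x - x‖ ^ 2 - ‖T' x - x‖ ^ 2) ≤ 0 := by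
  rw [cyclicallyMonotoneMapOn_iff]
  exact ⟨fun hc => hc.isLocallyOptimalOn hT, fun hopt =>
    isCyclicallyMonotone_of_sum_perm_nonneg _ fun _ ρ _ hy hyS =>
      IsLocallyOptimalOn.sum_inner_sub_perm_nonneg hopt hT ρ hy hyS⟩

/-- **Cyclical monotonicity is equivalent to local optimality.** Let `S, S' ⊆ ℝ^d` be
locally finite sets and `T : S → S'` a bijection. Then `T` is cyclically monotone iff for
every bijection `T̃ : S → S'` differing from `T` at only finitely many points of `S`,
`∑_{x ∈ S, T̃(x) ≠ T(x)} (|T(x) - x|² - |T̃(x) - x|²) ≤ 0`. -/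
theorem cyclicallyMonotone_iff_locally_optimal
    {d : ℕ} (S S' : Set (Euc d))
    (hS : IsLocallyFiniteSet S) (hS' : IsLocallyFiniteSet S')
    (T : Euc d → Euc d) (hT : Set.BijOn T S S') :
    CyclicallyMonotoneMapOn S T ↔
      ∀ T' : Euc d → Euc d, Set.BijOn T' S S' →
        ∀ hfin : {x ∈ S | T' x ≠ T x}.Finite,
          ∑ x ∈ hfin.toFinset, (‖T x - x‖ ^ 2 - ‖T' x - x‖ ^ 2) ≤ 0 :=
  cyclicallyMonotone_iff_locally_optimal_general S S' T hT

end
end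

section
/- There exist constants C, c > 0 depending only on the dimension d with the following property. Let ε ∈ (0,1], R > 0, n ∈ [1/2, 2], and let μ be a Borel measure on ℝ^d. Suppose there is a Borel measure π on ℝ^d × ℝ^d whose first marginal is μ restricted to (−2R,2R)^d and whose second marginal is n times the Lebesgue measure restricted to (−2R,2R)^d, satisfying ∫ |x − y|² dπ(x,y) ≤ (4εR)^{d+2}. Then every axis-parallel cube Q ⊆ (−2R,2R)^d of side length r with r ≥ CεR satisfies μ(Q) ≥ c r^d. -/
open MeasureTheory

noncomputable section

/-- The open box `(-R, R)^d`. -/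
def openBox (d : ℕ) (R : ℝ) : Set (Euc d) := {x | ∀ i, x i ∈ Set.Ioo (-R) R}

/-- The axis-parallel closed cube with lower-left corner `a` and side length `r`,
i.e. a translate of `[0, r]^d`. -/
def cube {d : ℕ} (a : Euc d) (r : ℝ) : Set (Euc d) := {x | ∀ i, x i ∈ Set.Icc (a i) (a i + r)}


/-!
Let `Q' ⊆ Q` be the concentric cube of side `r / 2`. The second marginal gives it mass
`n (r / 2)^d ≥ (r / 2)^d / 2`. The part of this mass that the coupling does not take from `Q`
travels at least `r / 4`, so by Markov's inequality it is at most `16 (4εR)^(d+2) / r²`, which is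
`≤ (r / 8)^d / 4 ≤ (r / 2)^d / 4` once `r ≥ 32εR`. Hence `μ(Q) ≥ (r / 2)^d / 4`.
-/

section Transport

variable {X : Type*} [PseudoMetricSpace X] [MeasurableSpace X] [OpensMeasurableSpace X]
  [SecondCountableTopology X]

/-- Mass of `ν` on `A` either comes from `B` or travels at least `δ`; Markov's inequality
bounds the latter by the transport cost. -/
theorem measure_le_add_lintegral_dist_sq_div {μ ν : Measure X} {π : Measure (X × X)}
    (hfst : π.map Prod.fst = μ) (hsnd : π.map Prod.snd = ν) {A B : Set X}
    (hA : MeasurableSet A) {δ : ℝ} (hδ : 0 < δ) (hsep : ∀ x ∉ B, ∀ y ∈ A, δ ≤ dist x y) :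
    ν A ≤ μ B + (∫⁻ p, ENNReal.ofReal (dist p.1 p.2 ^ 2) ∂π) / ENNReal.ofReal (δ ^ 2) := by
  have hfar : Prod.snd ⁻¹' A ⊆
      Prod.fst ⁻¹' B ∪ {p | ENNReal.ofReal (δ ^ 2) ≤ ENNReal.ofReal (dist p.1 p.2 ^ 2)} := by
    rintro ⟨x, _⟩ hy
    by_cases hx : x ∈ B
    · exact Or.inl hx
    · exact Or.inr (ENNReal.ofReal_le_ofReal (pow_le_pow_left₀ hδ.le (hsep x hx _ hy) 2))
  calc ν A = π (Prod.snd ⁻¹' A) := by rw [← hsnd, Measure.map_apply measurable_snd hA]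
    _ ≤ π (Prod.fst ⁻¹' B) + π {p | ENNReal.ofReal (δ ^ 2) ≤ ENNReal.ofReal (dist p.1 p.2 ^ 2)} :=
      (measure_mono hfar).trans (measure_union_le _ _)
    _ ≤ μ B + (∫⁻ p, ENNReal.ofReal (dist p.1 p.2 ^ 2) ∂π) / ENNReal.ofReal (δ ^ 2) := by
      gcongr
      · rw [← hfst]
        exact Measure.le_map_apply measurable_fst.aemeasurable B
      · exact meas_ge_le_lintegral_div (by fun_prop) (by simp [hδ.ne']) ENNReal.ofReal_ne_top

end Transport

section Cube

variable {d : ℕ}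

theorem cube_eq_ofLp_preimage_pi (a : Euc d) (r : ℝ) :
    cube a r = WithLp.ofLp ⁻¹' Set.univ.pi fun i => Set.Icc (a i) (a i + r) := by
  ext x
  simp [cube, -Set.pi_univ_Icc]

theorem measurableSet_cube (a : Euc d) (r : ℝ) : MeasurableSet (cube a r) := by
  rw [cube_eq_ofLp_preimage_pi]
  exact (MeasurableSet.univ_pi fun _ => measurableSet_Icc).preimage (by fun_prop)

theorem volume_cube (a : Euc d) {r : ℝ} (hr : 0 ≤ r) :
    volume (cube a r) = ENNReal.ofReal (r ^ d) := by
  rw [cube_eq_ofLp_preimage_pi, (PiLp.volume_preserving_ofLp (Fin d)).measure_preimage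
    (MeasurableSet.univ_pi fun _ => measurableSet_Icc).nullMeasurableSet, volume_pi_pi]
  simp [ENNReal.ofReal_pow hr]

theorem cube_subset_cube {a b : Euc d} {r t : ℝ} (hab : ∀ i, a i ≤ b i ∧ b i + t ≤ a i + r) :
    cube b t ⊆ cube a r := fun _ hy i =>
  ⟨(hab i).1.trans (hy i).1, (hy i).2.trans (hab i).2⟩

theorem le_dist_of_notMem_cube {a b x y : Euc d} {r s t : ℝ}
    (hab : ∀ i, a i + s ≤ b i ∧ b i + t + s ≤ a i + r) (hx : x ∉ cube a r) (hy : y ∈ cube b t) :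
    s ≤ dist x y := by
  obtain ⟨i, hi⟩ : ∃ i, x i ∉ Set.Icc (a i) (a i + r) := by simpa [cube] using hx
  have hyi := hy i
  have hab := hab i
  calc s ≤ |x i - y i| := by
        rw [Set.mem_Icc, not_and_or, not_le, not_le] at hi
        rw [Set.mem_Icc] at hyi
        rcases hi with hi | hi
        · rw [abs_sub_comm]; exact le_abs.2 (Or.inl (by linarith))
        · exact le_abs.2 (Or.inl (by linarith))
    _ = dist (x i) (y i) := (Real.dist_eq _ _).symm
    _ ≤ dist x y := PiLp.dist_apply_le x y i

end Cube

theorem div_four_add_pow_div_sq_le_mul_pow {d : ℕ} {s n r : ℝ} (hs : 0 ≤ s) (hn : 1 / 2 ≤ n)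
    (hr0 : 0 < r) (hr : 8 * s ≤ r) :
    (r / 2) ^ d / 4 + s ^ (d + 2) / (r / 4) ^ 2 ≤ n * (r / 2) ^ d := by
  have hcost : s ^ (d + 2) / (r / 4) ^ 2 ≤ (r / 8) ^ d / 4 := by
    calc s ^ (d + 2) / (r / 4) ^ 2 ≤ (r / 8) ^ (d + 2) / (r / 4) ^ 2 := by gcongr; linarith
      _ = (r / 8) ^ d / 4 := by field_simp; ring
  have h82 : (r / 8) ^ d ≤ (r / 2) ^ d := by gcongr; norm_num
  have hpos : 0 ≤ (r / 2) ^ d := by positivity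
  nlinarith

/-- **There are enough points on mesoscopic scales.** There are dimensional constants
`C, c > 0` such that: if `ε ∈ (0,1]`, `R > 0`, `n ∈ [1/2, 2]`, and `π` is a coupling
between `μ ⌞ (-2R, 2R)^d` and `n Leb ⌞ (-2R, 2R)^d` with `∫ |x - y|² dπ ≤ (4εR)^{d+2}`,
then every axis-parallel cube `Q ⊆ (-2R, 2R)^d` of side length `r ≥ CεR` satisfies
`μ(Q) ≥ c r^d`. -/
theorem enough_points_on_mesoscopic_scales (d : ℕ) :
    ∃ C : ℝ, 0 < C ∧ ∃ c : ℝ, 0 < c ∧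
      ∀ (ε R n : ℝ), ε ∈ Set.Ioc (0 : ℝ) 1 → 0 < R → n ∈ Set.Icc (1 / 2 : ℝ) 2 →
      ∀ (μ : Measure (Euc d)) (π : Measure (Euc d × Euc d)),
        π.map Prod.fst = μ.restrict (openBox d (2 * R)) →
        π.map Prod.snd = ENNReal.ofReal n • volume.restrict (openBox d (2 * R)) →
        (∫⁻ p, ENNReal.ofReal (‖p.1 - p.2‖ ^ 2) ∂π) ≤
          ENNReal.ofReal ((4 * ε * R) ^ (d + 2)) →
        ∀ (a : Euc d) (r : ℝ), C * ε * R ≤ r → cube a r ⊆ openBox d (2 * R) →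
          ENNReal.ofReal (c * r ^ d) ≤ μ (cube a r) := by
  refine ⟨32, by norm_num, (1 / 2) ^ d / 4, by positivity, ?_⟩
  rintro ε R n ⟨hε, -⟩ hR ⟨hn, -⟩ μ π hfst hsnd hcost a r hr hQ
  have hr0 : 0 < r := by nlinarith [mul_pos hε hR]
  -- the inner cube of side `r / 2`, at distance `r / 4` from the complement of `cube a r`
  set b : Euc d := WithLp.toLp 2 fun i => a i + r / 4
  have hab : ∀ i, a i + r / 4 ≤ b i ∧ b i + r / 2 + r / 4 ≤ a i + r := fun i => by
    simp only [b]; constructor <;> linarith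
  have hb : cube b (r / 2) ⊆ openBox d (2 * R) :=
    (cube_subset_cube fun i => by constructor <;> linarith [hab i]).trans hQ
  have hmass := measure_le_add_lintegral_dist_sq_div hfst hsnd (measurableSet_cube b (r / 2))
    (by positivity) fun x hx y hy => le_dist_of_notMem_cube hab hx hy
  simp only [← dist_eq_norm] at hcost
  rw [Measure.smul_apply, Measure.restrict_apply (measurableSet_cube b _), Set.inter_eq_left.2 hb,
    volume_cube b (by positivity), smul_eq_mul, ← ENNReal.ofReal_mul (by linarith)] at hmass
  have hcost_div := ENNReal.div_le_div_right hcost (ENNReal.ofReal ((r / 4) ^ 2))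
  rw [← ENNReal.ofReal_div_of_pos (by positivity)] at hcost_div
  have key := div_four_add_pow_div_sq_le_mul_pow (d := d) (s := 4 * ε * R) (by positivity) hn hr0
    (by linarith)
  rw [show (1 / 2 : ℝ) ^ d / 4 * r ^ d = (r / 2) ^ d / 4 by ring]
  refine ENNReal.le_of_add_le_add_right
    (ENNReal.ofReal_ne_top (r := (4 * ε * R) ^ (d + 2) / (r / 4) ^ 2)) ?_
  calc ENNReal.ofReal ((r / 2) ^ d / 4) + ENNReal.ofReal ((4 * ε * R) ^ (d + 2) / (r / 4) ^ 2)
      ≤ ENNReal.ofReal (n * (r / 2) ^ d) := by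
        rw [← ENNReal.ofReal_add (by positivity) (by positivity)]
        exact ENNReal.ofReal_le_ofReal key
    _ ≤ _ := hmass.trans (add_le_add (Measure.restrict_apply_le _ _) hcost_div)

end
end

section
/- Let d ≥ 1, let S ⊆ ℝ^d, and let T : S → ℝ^d be a monotone map, i.e. (T(x') − T(x''))·(x' − x'') ≥ 0 for all x', x'' ∈ S. Let x ∈ S, r > 0, ρ ∈ (0,1], and suppose there are points x₁, …, x_{d+1} ∈ S such that for every n = 1, …, d+1: r ≤ |x_n − x| ≤ 2r and |T(x_n) − x_n| ≤ r, and such that the closed Euclidean ball of radius ρ centered at the origin is contained in the convex hull of the unit vectors {(x_n − x)/|x_n − x| : n = 1, …, d+1}. Then |T(x) − x| ≤ 6r/ρ. -/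
/-!
Write `v = T x - x`. For each `n`, splitting `v = (T x - T xₙ) + (T xₙ - xₙ) + (xₙ - x)` and using
monotonicity on the first piece gives `⟪v, xₙ - x⟫ ≤ r · 2r + (2r)² = 6r²`, hence
`⟪v, uₙ⟫ ≤ 6r` for the unit direction `uₙ = (xₙ - x)/|xₙ - x|` since `|xₙ - x| ≥ r`.
This half-space bound passes to the convex hull of the `uₙ`, which contains the point
`ρ v/|v|`, so `ρ |v| ≤ 6r`.
-/

noncomputable section

open RealInnerProductSpace

variable {E : Type*} [NormedAddCommGroup E] [InnerProductSpace ℝ E]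

theorem mul_norm_le_of_closedBall_subset_convexHull {s : Set E} {ρ c : ℝ} (hρ : 0 ≤ ρ)
    (hs : Metric.closedBall (0 : E) ρ ⊆ convexHull ℝ s) {v : E} (hv : ∀ u ∈ s, ⟪v, u⟫ ≤ c) :
    ρ * ‖v‖ ≤ c := by
  have hhull : convexHull ℝ s ⊆ {u | ⟪v, u⟫ ≤ c} :=
    convexHull_min hv (convex_halfSpace_le (innerSL ℝ v).isLinear c)
  have hmem : (ρ * ‖v‖⁻¹) • v ∈ Metric.closedBall (0 : E) ρ := by
    rw [mem_closedBall_zero_iff, norm_smul, Real.norm_of_nonneg (by positivity), mul_assoc]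
    exact mul_le_of_le_one_right hρ (inv_mul_le_one_of_le₀ le_rfl (norm_nonneg v))
  have := hhull (hs hmem)
  rw [Set.mem_ofPred_eq, real_inner_smul_right, real_inner_self_eq_norm_mul_norm] at this
  rcases eq_or_ne ‖v‖ 0 with hv0 | hv0
  · simpa [hv0] using this
  · rwa [mul_assoc, inv_mul_cancel_left₀ hv0] at this

theorem inner_sub_le_of_inner_sub_nonneg {a b ta tb : E} (hmono : 0 ≤ ⟪tb - ta, b - a⟫) :
    ⟪ta - a, b - a⟫ ≤ ‖tb - b‖ * ‖b - a‖ + ‖b - a‖ ^ 2 := by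
  have hsplit : ta - a = -(tb - ta) + (tb - b) + (b - a) := by abel
  rw [hsplit, inner_add_left, inner_add_left, inner_neg_left, real_inner_self_eq_norm_sq]
  linarith [real_inner_le_norm (tb - b) (b - a)]

theorem inner_normalize_le_of_inner_sub_nonneg {a b ta tb : E} {r : ℝ} (hr : 0 < r)
    (hmono : 0 ≤ ⟪tb - ta, b - a⟫) (hlow : r ≤ ‖b - a‖) (hhigh : ‖b - a‖ ≤ 2 * r)
    (hT : ‖tb - b‖ ≤ r) :
    ⟪ta - a, ‖b - a‖⁻¹ • (b - a)⟫ ≤ 6 * r := by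
  have hba : 0 < ‖b - a‖ := hr.trans_le hlow
  have hinner : ⟪ta - a, b - a⟫ ≤ 6 * r ^ 2 := by
    have := inner_sub_le_of_inner_sub_nonneg hmono
    have : ‖tb - b‖ * ‖b - a‖ ≤ r * (2 * r) := mul_le_mul hT hhigh hba.le hr.le
    have : ‖b - a‖ ^ 2 ≤ (2 * r) ^ 2 := pow_le_pow_left₀ hba.le hhigh 2
    linarith
  rw [real_inner_smul_right, inv_mul_le_iff₀ hba]
  nlinarith

theorem monotone_shielding_estimate_general
    (d : ℕ) (S : Set (Euc d)) (T : Euc d → Euc d)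
    (hmono : ∀ x' ∈ S, ∀ x'' ∈ S, 0 ≤ (inner ℝ (T x' - T x'') (x' - x'') : ℝ))
    (x : Euc d) (hx : x ∈ S) (r ρ : ℝ) (hr : 0 < r) (hρ : ρ ∈ Set.Ioc (0 : ℝ) 1)
    (xs : Fin (d + 1) → Euc d) (hxs : ∀ n, xs n ∈ S)
    (hlow : ∀ n, r ≤ ‖xs n - x‖) (hhigh : ∀ n, ‖xs n - x‖ ≤ 2 * r)
    (hT : ∀ n, ‖T (xs n) - xs n‖ ≤ r)
    (hconv : Metric.closedBall (0 : Euc d) ρ ⊆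
      convexHull ℝ (Set.range fun n => ‖xs n - x‖⁻¹ • (xs n - x))) :
    ‖T x - x‖ ≤ 6 * r / ρ := by
  have hdir : ∀ u ∈ Set.range fun n => ‖xs n - x‖⁻¹ • (xs n - x), ⟪T x - x, u⟫ ≤ 6 * r := by
    rintro _ ⟨n, rfl⟩
    exact inner_normalize_le_of_inner_sub_nonneg hr (hmono _ (hxs n) x hx) (hlow n) (hhigh n)
      (hT n)
  rw [le_div_iff₀ hρ.1, mul_comm ‖T x - x‖]
  exact mul_norm_le_of_closedBall_subset_convexHull hρ.1.le hconv hdir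

/-- **Shielding estimate for monotone maps.** Let `T : S → ℝ^d` be monotone. If around
`x ∈ S` there are points `x₁, …, x_{d+1} ∈ S` with `r ≤ |xₙ - x| ≤ 2r` and
`|T(xₙ) - xₙ| ≤ r`, whose normalized directions `(xₙ - x)/|xₙ - x|` have a convex hull
containing the closed ball of radius `ρ ∈ (0, 1]`, then `|T(x) - x| ≤ 6r/ρ`. -/
theorem monotone_shielding_estimate
    (d : ℕ) (hd : 1 ≤ d) (S : Set (Euc d)) (T : Euc d → Euc d)
    (hmono : ∀ x' ∈ S, ∀ x'' ∈ S, 0 ≤ (inner ℝ (T x' - T x'') (x' - x'') : ℝ))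
    (x : Euc d) (hx : x ∈ S) (r ρ : ℝ) (hr : 0 < r) (hρ : ρ ∈ Set.Ioc (0 : ℝ) 1)
    (xs : Fin (d + 1) → Euc d) (hxs : ∀ n, xs n ∈ S)
    (hlow : ∀ n, r ≤ ‖xs n - x‖) (hhigh : ∀ n, ‖xs n - x‖ ≤ 2 * r)
    (hT : ∀ n, ‖T (xs n) - xs n‖ ≤ r)
    (hconv : Metric.closedBall (0 : Euc d) ρ ⊆
      convexHull ℝ (Set.range fun n => ‖xs n - x‖⁻¹ • (xs n - x))) :
    ‖T x - x‖ ≤ 6 * r / ρ :=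
  monotone_shielding_estimate_general d S T hmono x hx r ρ hr hρ xs hxs hlow hhigh hT hconv

end
end
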